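/- arXiv:1904.04299 — 6 statements merged into one kernel-verified Lean document; each statement's English description precedes it below -/
import Mathlib

section
/- Let F be an algebraically closed field. Suppose L : F^n → F^m and M : F^r → F^m are polynomial maps such that L(F^n) ⊆ M(F^r). Let K = F(z_1,…,z_n) be the field of rational functions in n indeterminates over F and let K̄ be an algebraic closure of K. Then there exist elements b_1,…,b_r ∈ K̄ such that L(z_1,…,z_n) = M(b_1,…,b_r) holds in K̄^m, where L(z_1,…,z_n) denotes the vector whose coordinates are the coordinate polynomials of L evaluated at the indeterminates z_1,…,z_n, and M(b_1,…,b_r) denotes the vector obtained by evaluating the coordinate polynomials of M at (b_1,…,b_r). -/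
open MvPolynomial

abbrev ZZ (F : Type*) [Field F] (n : ℕ) := MvPolynomial (Fin n) F
abbrev KK (F : Type*) [Field F] (n : ℕ) := FractionRing (ZZ F n)
abbrev KB (F : Type*) [Field F] (n : ℕ) := AlgebraicClosure (KK F n)

set_option maxHeartbeats 1000000 in
set_option synthInstance.maxHeartbeats 400000 in
/-- Numeric to symbolic decomposition over the algebraic closure of the function field
(Proposition `prop:gensymb`): if `im L ⊆ im M` for polynomial maps `L : F^n → F^m` and
`M : F^r → F^m`, then there are algebraic functions `b₁,…,b_r` in the algebraic closure
of `F(z₁,…,z_n)` with `L(z₁,…,z_n) = M(b₁,…,b_r)`. -/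
theorem numeric_to_symbolic_algebraic_closure
    {F : Type*} [Field F] [IsAlgClosed F] {n m r : ℕ}
    (L : Fin m → MvPolynomial (Fin n) F) (M : Fin m → MvPolynomial (Fin r) F)
    (him : ∀ x : Fin n → F, ∃ y : Fin r → F,
      ∀ j : Fin m, eval x (L j) = eval y (M j)) :
    ∃ b : Fin r → AlgebraicClosure (FractionRing (MvPolynomial (Fin n) F)),
      ∀ j : Fin m,
        aeval (fun i : Fin n =>
          algebraMap (MvPolynomial (Fin n) F)
            (AlgebraicClosure (FractionRing (MvPolynomial (Fin n) F))) (X i)) (L j)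
        = aeval b (M j) := by
  classical
  let ψ : ZZ F n →+* KK F n := algebraMap _ _
  -- target values
  let c : Fin m → KK F n := fun j => ψ (L j)
  -- the system of equations over K
  let p : Fin m → MvPolynomial (Fin r) (KK F n) :=
    fun j => map (algebraMap F (KK F n)) (M j) - C (c j)
  -- corresponding polynomials over Z
  let q : Fin m → MvPolynomial (Fin r) (ZZ F n) :=
    fun j => map (C : F →+* ZZ F n) (M j) - C (L j)
  have hpq : ∀ j, map ψ (q j) = p j := by
    intro j
    simp only [q, p, map_sub, map_map, map_C]
    rw [IsScalarTower.algebraMap_eq F (ZZ F n) (KK F n)]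
    rfl
  -- the ideal is proper
  have hJ : Ideal.span (Set.range p) ≠ ⊤ := by
    intro htop
    rw [Ideal.eq_top_iff_one] at htop
    obtain ⟨g, hg⟩ := Ideal.mem_span_range_iff_exists_fun.mp htop
    -- clear denominators
    obtain ⟨d, hd⟩ := IsLocalization.exist_integer_multiples (nonZeroDivisors (ZZ F n))
      ((Finset.univ : Finset (Fin m)).biUnion fun j => (g j).support.image fun k => (j, k))
      (fun jk : Fin m × (Fin r →₀ ℕ) => coeff jk.2 (g jk.1))
    have hch : ∀ (j : Fin m) (k : Fin r →₀ ℕ), ∃ az : ZZ F n,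
        k ∈ (g j).support → ψ az = (d : ZZ F n) • coeff k (g j) := by
      intro j k
      by_cases hk : k ∈ (g j).support
      · obtain ⟨az, haz⟩ := hd (j, k) (Finset.mem_biUnion.2 ⟨j, Finset.mem_univ _,
          Finset.mem_image.2 ⟨k, hk, rfl⟩⟩)
        exact ⟨az, fun _ => haz⟩
      · exact ⟨0, fun h => absurd h hk⟩
    choose a ha using hch
    let ghat : Fin m → MvPolynomial (Fin r) (ZZ F n) := fun j =>
      ∑ k ∈ (g j).support, monomial k (a j k)
    have key : ∀ j, map ψ (ghat j) = C (ψ (d : ZZ F n)) * g j := by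
      intro j
      ext k
      rw [coeff_map, coeff_C_mul]
      simp only [ghat]
      rw [coeff_sum]
      simp only [coeff_monomial]
      rw [Finset.sum_ite_eq' (g j).support k (a j)]
      by_cases hk : k ∈ (g j).support
      · rw [if_pos hk, ha j k hk, Algebra.smul_def]
      · rw [if_neg hk, map_zero, notMem_support_iff.mp hk, mul_zero]
    -- the identity over Z
    have heq : ∑ j, ghat j * q j = C (d : ZZ F n) := by
      apply MvPolynomial.map_injective ψ (IsFractionRing.injective (ZZ F n) (KK F n))
      rw [map_sum, map_C]
      calc ∑ j, map ψ (ghat j * q j)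
          = ∑ j, C (ψ (d : ZZ F n)) * (g j * p j) := by
            refine Finset.sum_congr rfl fun j _ => ?_
            rw [map_mul, key, hpq]; ring
        _ = C (ψ (d : ZZ F n)) * ∑ j, g j * p j := by rw [Finset.mul_sum]
        _ = C (ψ (d : ZZ F n)) := by rw [hg, mul_one]
    -- specialize
    have hdne : (d : ZZ F n) ≠ 0 := nonZeroDivisors.coe_ne_zero d
    have hx : ∃ x : Fin n → F, eval x (d : ZZ F n) ≠ 0 := by
      by_contra hall
      push_neg at hall
      exact hdne (MvPolynomial.funext fun x => by simpa using hall x)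
    obtain ⟨x, hx⟩ := hx
    obtain ⟨y, hy⟩ := him x
    let E : MvPolynomial (Fin r) (ZZ F n) →+* F :=
      (eval y : MvPolynomial (Fin r) F →+* F).comp (map (eval x : ZZ F n →+* F))
    have hEq : ∀ j, E (q j) = 0 := by
      intro j
      simp only [E, q, RingHom.comp_apply, map_sub, map_map, map_C]
      have h2 : (eval x : ZZ F n →+* F).comp (C : F →+* ZZ F n) = RingHom.id F := by
        ext a; simp
      rw [h2, map_id]
      rw [eval_C]
      rw [← hy j]
      ring
    have hE := congrArg E heq
    rw [map_sum] at hE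
    simp only [map_mul, hEq, mul_zero, Finset.sum_const_zero] at hE
    simp only [E, RingHom.comp_apply, map_C, eval_C] at hE
    exact hx hE.symm
  -- get a maximal ideal above
  obtain ⟨I, hImax, hJI⟩ := Ideal.exists_le_maximal _ hJ
  letI : Field (MvPolynomial (Fin r) (KK F n) ⧸ I) := Ideal.Quotient.field I
  haveI : Algebra.IsIntegral (KK F n) (MvPolynomial (Fin r) (KK F n) ⧸ I) :=
    ⟨MvPolynomial.quotient_mk_comp_C_isIntegral_of_isJacobsonRing (R := KK F n) I⟩
  haveI : Algebra.IsAlgebraic (KK F n) (MvPolynomial (Fin r) (KK F n) ⧸ I) :=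
    Algebra.IsIntegral.isAlgebraic
  let ρ : (MvPolynomial (Fin r) (KK F n) ⧸ I) →ₐ[KK F n] KB F n := IsAlgClosed.lift
  let τ : MvPolynomial (Fin r) (KK F n) →ₐ[KK F n] KB F n :=
    ρ.comp (Ideal.Quotient.mkₐ (KK F n) I)
  refine ⟨fun i => τ (X i), fun j => ?_⟩
  have hpj : τ (p j) = 0 := by
    have hmem : p j ∈ I := hJI (Ideal.subset_span ⟨j, rfl⟩)
    simp only [τ, AlgHom.comp_apply, Ideal.Quotient.mkₐ_eq_mk]
    rw [Ideal.Quotient.eq_zero_iff_mem.mpr hmem, map_zero]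
  have hτM : τ (map (algebraMap F (KK F n)) (M j)) = aeval (fun i => τ (X i)) (M j) := by
    calc τ (map (algebraMap F (KK F n)) (M j))
        = aeval (⇑τ ∘ X) (map (algebraMap F (KK F n)) (M j)) := by
          conv_lhs => rw [aeval_unique τ]
      _ = aeval (⇑τ ∘ X) (M j) :=
          aeval_map_algebraMap (R := F) (A := KK F n) (B := KB F n) (⇑τ ∘ X) (M j)
      _ = aeval (fun i => τ (X i)) (M j) := rfl
  have hLHS : aeval (fun i : Fin n => algebraMap (ZZ F n) (KB F n) (X i)) (L j)
      = algebraMap (ZZ F n) (KB F n) (L j) := by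
    have h1 := comp_aeval_apply (f := (X : Fin n → ZZ F n))
      (IsScalarTower.toAlgHom F (ZZ F n) (KB F n)) (L j)
    rw [aeval_X_left_apply] at h1
    simp only [IsScalarTower.coe_toAlgHom'] at h1
    exact h1.symm
  rw [hLHS]
  have hcj : τ (C (c j)) = algebraMap (ZZ F n) (KB F n) (L j) := by
    show τ (algebraMap (KK F n) (MvPolynomial (Fin r) (KK F n)) (c j)) = _
    rw [AlgHom.commutes]
    show algebraMap (KK F n) (KB F n) (algebraMap (ZZ F n) (KK F n) (L j)) = _
    rw [← IsScalarTower.algebraMap_apply (ZZ F n) (KK F n) (KB F n)]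
  have hfin : τ (map (algebraMap F (KK F n)) (M j)) = τ (C (c j)) := by
    have h3 := hpj
    simp only [p, map_sub, sub_eq_zero] at h3
    exact h3
  rw [hτM] at hfin
  rw [hfin]
  exact hcj.symm
end

section
/- Let F be an algebraically closed field of characteristic zero, let V be an F-vector space, let S ⊆ V be a spanning subset, and let φ : V → Ten_F(m,k) be an F-linear map. Fix an integer q ≥ 1, F[ε]-submodules U_1,…,U_N of Ten_{F[ε]}(m,k) = (F[ε]^m)^{⊗k}, and set U = U_1 + ⋯ + U_N. Suppose that every φ(s) with s ∈ S degenerates to U with order q, i.e., ε^{q−1}·φ(s) = T_1 + ε^q·T_2 for some T_1 ∈ U and T_2 ∈ Ten_{F[ε]}(m,k). Suppose moreover that for each i every element of U_i is a sum of at most r_i simple F[ε]-tensors. Then every φ(v) with v ∈ V degenerates to U with order q, and consequently brk(φ(v)) ≤ r_1 + ⋯ + r_N for every v ∈ V. -/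
open scoped TensorProduct
open PiTensorProduct

/-- The tensor rank over a commutative (semi)ring `R` of `T ∈ (R^m)^{⊗k}`:
the least `r` such that `T` is a sum of `r` simple tensors. -/
noncomputable def trkR {R : Type*} [CommSemiring R] {m k : ℕ}
    (T : ⨂[R] _ : Fin k, (Fin m → R)) : ℕ :=
  sInf {r : ℕ | ∃ v : Fin r → Fin k → Fin m → R, T = ∑ i, ⨂ₜ[R] j, v i j}

/-- Coordinate functional of `(R^m)^{⊗k}` at the multi-index `f : Fin k → Fin m`. -/
noncomputable def tcoord {R : Type*} [CommSemiring R] {m k : ℕ} (f : Fin k → Fin m) :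
    (⨂[R] _ : Fin k, (Fin m → R)) →ₗ[R] R :=
  PiTensorProduct.lift
    ((MultilinearMap.mkPiAlgebra R (Fin k) R).compLinearMap fun j => LinearMap.proj (f j))

/-- `T ∈ Ten_F(m,k)` has border rank at most `r`: every polynomial in the tensor
coordinates that vanishes on all tensors of rank at most `r` also vanishes at `T`. -/
def brkLE {F : Type*} [Field F] {m k : ℕ}
    (T : ⨂[F] _ : Fin k, (Fin m → F)) (r : ℕ) : Prop :=
  ∀ P : MvPolynomial (Fin k → Fin m) F,
    (∀ T' : ⨂[F] _ : Fin k, (Fin m → F), trkR T' ≤ r →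
      MvPolynomial.eval (fun f => tcoord f T') P = 0) →
    MvPolynomial.eval (fun f => tcoord f T) P = 0

/-- The canonical inclusion `Ten_F(m,k) → Ten_{F[ε]}(m,k)` induced by `F ⊆ F[ε]`,
written out in coordinates. -/
noncomputable def incl {F : Type*} [Field F] {m k : ℕ}
    (T : ⨂[F] _ : Fin k, (Fin m → F)) :
    ⨂[Polynomial F] _ : Fin k, (Fin m → Polynomial F) :=
  ∑ f : Fin k → Fin m, Polynomial.C (tcoord f T) •
    ⨂ₜ[Polynomial F] j, (Pi.single (f j) 1 : Fin m → Polynomial F)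

/-!
Degeneration to `U` is preserved under `F`-linear combinations, so it passes from `S` to all
of `V`. If `ε^(q-1) T = T₁ + ε^q T₂` with `T₁` a sum of `R` simple `F[ε]`-tensors, then
`Γ = T - ε T₂` satisfies `ε^(q-1) Γ = T₁`, so specializing `ε` to any `a ≠ 0` gives a tensor
`Γ(a)` of rank at most `R`. A polynomial in the coordinates that vanishes on tensors of rank at
most `R` thus vanishes at `Γ(a)` for infinitely many `a`, hence for all `a`, in particular at
`Γ(0) = T`.
-/

open Polynomial

section CommSemiring

variable {R : Type*} [CommSemiring R] {m k : ℕ}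

theorem tcoord_tprod (f : Fin k → Fin m) (p : Fin k → Fin m → R) :
    tcoord f (⨂ₜ[R] j, p j) = ∏ j, p j (f j) := by
  simp [tcoord]

variable (R m k) in
noncomputable def tensorBasis : Module.Basis (Fin k → Fin m) R (⨂[R] _ : Fin k, (Fin m → R)) :=
  Basis.piTensorProduct fun _ => Pi.basisFun R (Fin m)

theorem tensorBasis_repr_apply (T : ⨂[R] _ : Fin k, (Fin m → R)) (f : Fin k → Fin m) :
    (tensorBasis R m k).repr T f = tcoord f T := by
  change (Finsupp.lapply f ∘ₗ (tensorBasis R m k).repr.toLinearMap) T = tcoord f T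
  congr 1
  ext p
  simp [tensorBasis, tcoord_tprod]

theorem tcoord_equivFun_symm (c : (Fin k → Fin m) → R) (f : Fin k → Fin m) :
    tcoord f ((tensorBasis R m k).equivFun.symm c) = c f := by
  rw [← tensorBasis_repr_apply, ← Module.Basis.equivFun_apply, LinearEquiv.apply_symm_apply]

theorem ext_tcoord {T T' : ⨂[R] _ : Fin k, (Fin m → R)} (h : ∀ f, tcoord f T = tcoord f T') :
    T = T' :=
  (tensorBasis R m k).ext_elem fun f => by simp only [tensorBasis_repr_apply, h]

def IsSumOfSimple (r : ℕ) (T : ⨂[R] _ : Fin k, (Fin m → R)) : Prop :=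
  ∃ v : Fin r → Fin k → Fin m → R, T = ∑ i, ⨂ₜ[R] j, v i j

theorem trkR_le_of_isSumOfSimple {r : ℕ} {T : ⨂[R] _ : Fin k, (Fin m → R)}
    (h : IsSumOfSimple r T) : trkR T ≤ r :=
  Nat.sInf_le h

theorem IsSumOfSimple.add {a b : ℕ} {T T' : ⨂[R] _ : Fin k, (Fin m → R)}
    (hT : IsSumOfSimple a T) (hT' : IsSumOfSimple b T') : IsSumOfSimple (a + b) (T + T') := by
  obtain ⟨v, rfl⟩ := hT
  obtain ⟨w, rfl⟩ := hT'
  exact ⟨Fin.append v w, by simp [Fin.sum_univ_add]⟩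

theorem IsSumOfSimple.smul (hk : 0 < k) (c : R) {r : ℕ} {T : ⨂[R] _ : Fin k, (Fin m → R)}
    (hT : IsSumOfSimple r T) : IsSumOfSimple r (c • T) := by
  classical
  obtain ⟨v, rfl⟩ := hT
  refine ⟨fun i => Function.update (v i) ⟨0, hk⟩ (c • v i ⟨0, hk⟩), ?_⟩
  simp only [Finset.smul_sum, MultilinearMap.map_update_smul, Function.update_eq_self]

theorem isSumOfSimple_trkR (hk : 0 < k) (T : ⨂[R] _ : Fin k, (Fin m → R)) :
    IsSumOfSimple (trkR T) T := by
  refine Nat.sInf_mem (s := {r | IsSumOfSimple r T}) ?_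
  induction T using PiTensorProduct.induction_on with
  | smul_tprod c p => exact ⟨1, IsSumOfSimple.smul hk c ⟨fun _ => p, by simp⟩⟩
  | add T T' hT hT' =>
    obtain ⟨a, ha⟩ := hT
    obtain ⟨b, hb⟩ := hT'
    exact ⟨a + b, ha.add hb⟩

theorem trkR_add_le (hk : 0 < k) (T T' : ⨂[R] _ : Fin k, (Fin m → R)) :
    trkR (T + T') ≤ trkR T + trkR T' :=
  trkR_le_of_isSumOfSimple ((isSumOfSimple_trkR hk T).add (isSumOfSimple_trkR hk T'))

theorem trkR_smul_le (hk : 0 < k) (c : R) (T : ⨂[R] _ : Fin k, (Fin m → R)) :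
    trkR (c • T) ≤ trkR T :=
  trkR_le_of_isSumOfSimple ((isSumOfSimple_trkR hk T).smul hk c)

theorem trkR_le_sum_of_mem_sum (hk : 0 < k) {ι : Type*} (s : Finset ι)
    (U : ι → Submodule R (⨂[R] _ : Fin k, (Fin m → R))) (r : ι → ℕ)
    (hU : ∀ i ∈ s, ∀ u ∈ U i, trkR u ≤ r i) {T : ⨂[R] _ : Fin k, (Fin m → R)}
    (hT : T ∈ ∑ i ∈ s, U i) : trkR T ≤ ∑ i ∈ s, r i := by
  induction s using Finset.cons_induction generalizing T with
  | empty =>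
    rw [Finset.sum_empty, Submodule.zero_eq_bot, Submodule.mem_bot] at hT
    rw [Finset.sum_empty]
    exact trkR_le_of_isSumOfSimple ⟨Fin.elim0, by rw [hT, Fin.sum_univ_zero]⟩
  | cons i s hi ih =>
    rw [Finset.sum_cons, Submodule.add_eq_sup] at hT
    obtain ⟨u, hu, T', hT', rfl⟩ := Submodule.mem_sup.mp hT
    rw [Finset.sum_cons]
    exact (trkR_add_le hk u T').trans (add_le_add (hU i (s.mem_cons_self i) u hu)
      (ih (fun j hj => hU j (Finset.mem_cons_of_mem hj)) hT'))

theorem trkR_eq_zero_of_tcoord_ne_natCast {T : ⨂[R] _ : Fin 0, (Fin m → R)} (f : Fin 0 → Fin m)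
    (hT : ∀ n : ℕ, tcoord f T ≠ n) : trkR T = 0 :=
  Nat.sInf_eq_zero.2 <| Or.inr <| Set.eq_empty_of_forall_notMem fun r ⟨v, hv⟩ =>
    hT r (by simp [hv, tcoord_tprod])

noncomputable def evalTensor (a : R) :
    (⨂[R[X]] _ : Fin k, (Fin m → R[X])) →ₛₗ[evalRingHom a] ⨂[R] _ : Fin k, (Fin m → R) where
  toFun Γ := (tensorBasis R m k).equivFun.symm fun f => (tcoord f Γ).eval a
  map_add' Γ Γ' := by rw [← map_add]; congr 1; ext f; simp
  map_smul' p Γ := by rw [← map_smul]; congr 1; ext f; simp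

theorem tcoord_evalTensor (a : R) (Γ : ⨂[R[X]] _ : Fin k, (Fin m → R[X])) (f : Fin k → Fin m) :
    tcoord f (evalTensor a Γ) = (tcoord f Γ).eval a :=
  tcoord_equivFun_symm _ f

theorem evalTensor_tprod (a : R) (p : Fin k → Fin m → R[X]) :
    evalTensor a (⨂ₜ[R[X]] j, p j) = ⨂ₜ[R] j, fun x => (p j x).eval a :=
  ext_tcoord fun f => by simp [tcoord_evalTensor, tcoord_tprod, eval_prod]

theorem IsSumOfSimple.evalTensor (a : R) {r : ℕ} {Γ : ⨂[R[X]] _ : Fin k, (Fin m → R[X])}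
    (hΓ : IsSumOfSimple r Γ) : IsSumOfSimple r (evalTensor a Γ) := by
  obtain ⟨v, rfl⟩ := hΓ
  exact ⟨fun i j x => (v i j x).eval a, by simp [evalTensor_tprod]⟩

theorem trkR_evalTensor_le (hk : 0 < k) (a : R) (Γ : ⨂[R[X]] _ : Fin k, (Fin m → R[X])) :
    trkR (evalTensor a Γ) ≤ trkR Γ :=
  trkR_le_of_isSumOfSimple ((isSumOfSimple_trkR hk Γ).evalTensor a)

end CommSemiring

section Field

variable {F : Type*} [Field F] {m k : ℕ}

theorem incl_eq_equivFun_symm (T : ⨂[F] _ : Fin k, (Fin m → F)) :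
    incl T = (tensorBasis F[X] m k).equivFun.symm fun f => C (tcoord f T) := by
  simp [incl, tensorBasis, Module.Basis.equivFun_symm_apply]

theorem tcoord_incl (T : ⨂[F] _ : Fin k, (Fin m → F)) (f : Fin k → Fin m) :
    tcoord f (incl T) = C (tcoord f T) := by
  rw [incl_eq_equivFun_symm, tcoord_equivFun_symm]

theorem incl_add (T T' : ⨂[F] _ : Fin k, (Fin m → F)) : incl (T + T') = incl T + incl T' :=
  ext_tcoord fun f => by simp [tcoord_incl]

theorem incl_smul (a : F) (T : ⨂[F] _ : Fin k, (Fin m → F)) : incl (a • T) = C a • incl T :=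
  ext_tcoord fun f => by simp [tcoord_incl]

theorem incl_zero : incl (0 : ⨂[F] _ : Fin k, (Fin m → F)) = 0 := by
  simpa using incl_smul (0 : F) 0

theorem evalTensor_incl (a : F) (T : ⨂[F] _ : Fin k, (Fin m → F)) : evalTensor a (incl T) = T :=
  ext_tcoord fun f => by simp [tcoord_evalTensor, tcoord_incl]

theorem brkLE_evalTensor_of_infinite (Γ : ⨂[F[X]] _ : Fin k, (Fin m → F[X])) (r : ℕ)
    (h : {a | trkR (evalTensor a Γ) ≤ r}.Infinite) (b : F) : brkLE (evalTensor b Γ) r := by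
  intro P hP
  set Q : F[X] := MvPolynomial.aeval (fun f => tcoord f Γ) P
  have hQ : ∀ a, Q.eval a = MvPolynomial.eval (fun f => tcoord f (evalTensor a Γ)) P := by
    intro a
    simp only [Q, tcoord_evalTensor, ← coe_aeval_eq_eval, ← AlgHom.comp_apply,
      MvPolynomial.comp_aeval]
    rfl
  have hQ0 : Q = 0 :=
    eq_zero_of_infinite_isRoot Q (h.mono fun a ha => by rw [Set.mem_ofPred_eq, IsRoot, hQ, hP _ ha])
  rw [← hQ, hQ0, eval_zero]

def degenerationSubmodule (U : Submodule F[X] (⨂[F[X]] _ : Fin k, (Fin m → F[X]))) (q : ℕ) :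
    Submodule F (⨂[F] _ : Fin k, (Fin m → F)) where
  carrier := {T | ∃ T₁ ∈ U, ∃ T₂, (X : F[X]) ^ (q - 1) • incl T = T₁ + (X : F[X]) ^ q • T₂}
  zero_mem' := ⟨0, U.zero_mem, 0, by simp [incl_zero]⟩
  add_mem' := by
    rintro T T' ⟨T₁, hT₁, T₂, hT⟩ ⟨T₁', hT₁', T₂', hT'⟩
    refine ⟨T₁ + T₁', U.add_mem hT₁ hT₁', T₂ + T₂', ?_⟩
    rw [incl_add, smul_add, hT, hT', smul_add]
    abel
  smul_mem' := by
    rintro a T ⟨T₁, hT₁, T₂, hT⟩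
    refine ⟨C a • T₁, U.smul_mem _ hT₁, C a • T₂, ?_⟩
    rw [incl_smul, smul_comm, hT, smul_add, smul_comm (C a)]

theorem brkLE_of_degenerates [Infinite F] (hk : 0 < k) {q : ℕ} (hq : 1 ≤ q)
    {T : ⨂[F] _ : Fin k, (Fin m → F)} {T₁ T₂ : ⨂[F[X]] _ : Fin k, (Fin m → F[X])}
    (hT : (X : F[X]) ^ (q - 1) • incl T = T₁ + (X : F[X]) ^ q • T₂) {r : ℕ} (hT₁ : trkR T₁ ≤ r) :
    brkLE T r := by
  set Γ := incl T - (X : F[X]) • T₂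
  have hΓ : (X : F[X]) ^ (q - 1) • Γ = T₁ := by
    rw [smul_sub, hT, smul_smul, ← pow_succ, Nat.sub_add_cancel hq, add_sub_cancel_right]
  have hrank : ∀ a : F, a ≠ 0 → trkR (evalTensor a Γ) ≤ r := by
    intro a ha
    have hΓa : evalTensor a Γ = (a ^ (q - 1))⁻¹ • evalTensor a T₁ := by
      rw [← hΓ, map_smulₛₗ, coe_evalRingHom, eval_pow, eval_X, inv_smul_smul₀ (pow_ne_zero _ ha)]
    calc trkR (evalTensor a Γ) ≤ trkR (evalTensor a T₁) := hΓa ▸ trkR_smul_le hk _ _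
      _ ≤ trkR T₁ := trkR_evalTensor_le hk a T₁
      _ ≤ r := hT₁
  have hinf : {a | trkR (evalTensor a Γ) ≤ r}.Infinite :=
    (Set.finite_singleton (0 : F)).infinite_compl.mono fun a ha => hrank a ha
  simpa [Γ, evalTensor_incl] using brkLE_evalTensor_of_infinite Γ r hinf 0

/- For `k = 0` a sum of `s` simple tensors is the scalar `s`, so every scalar outside the image
of `ℕ` has the junk rank `sInf ∅ = 0`; the curve `T - a` below meets such scalars at
`a = T + (n + 1)`. -/
theorem brkLE_of_fin_zero [CharZero F] (T : ⨂[F] _ : Fin 0, (Fin m → F)) (r : ℕ) :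
    brkLE T r := by
  set Γ := incl T - (X : F[X]) • ⨂ₜ[F[X]] j, Fin.elim0 j
  let f₀ : Fin 0 → Fin m := Fin.elim0
  have hcoord : ∀ a, tcoord f₀ (evalTensor a Γ) = tcoord f₀ T - a := by
    intro a
    simp [Γ, tcoord_evalTensor, tcoord_incl, tcoord_tprod]
  have hrank : ∀ n : ℕ, trkR (evalTensor (tcoord f₀ T + (n + 1)) Γ) ≤ r := by
    intro n
    refine (trkR_eq_zero_of_tcoord_ne_natCast f₀ fun s hs => ?_).trans_le (Nat.zero_le r)
    rw [hcoord, sub_add_cancel_left, neg_eq_iff_add_eq_zero] at hs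
    exact Nat.cast_add_one_ne_zero (n + s) (by push_cast; linear_combination hs)
  have hinf : {a | trkR (evalTensor a Γ) ≤ r}.Infinite :=
    (Set.infinite_range_of_injective fun n n' h => by simpa using h).mono
      (Set.range_subset_iff.2 hrank)
  simpa [Γ, evalTensor_incl] using brkLE_evalTensor_of_infinite Γ r hinf 0

end Field

theorem degeneration_to_submodules_bounds_border_rank_general
    {F : Type*} [Field F] [CharZero F]
    {V : Type*} [AddCommGroup V] [Module F V]
    (S : Set V) (hS : Submodule.span F S = ⊤)
    {m k : ℕ}
    (φ : V →ₗ[F] ⨂[F] _ : Fin k, (Fin m → F))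
    (q : ℕ) (hq : 1 ≤ q) (N : ℕ)
    (U : Fin N →
      Submodule (Polynomial F) (⨂[Polynomial F] _ : Fin k, (Fin m → Polynomial F)))
    (r : Fin N → ℕ)
    (hdeg : ∀ s ∈ S, ∃ T₁ ∈ ∑ i, U i,
      ∃ T₂ : ⨂[Polynomial F] _ : Fin k, (Fin m → Polynomial F),
        (Polynomial.X : Polynomial F) ^ (q - 1) • incl (φ s)
          = T₁ + (Polynomial.X : Polynomial F) ^ q • T₂)
    (hU : ∀ i, ∀ u ∈ U i, trkR u ≤ r i) :
    (∀ v : V, ∃ T₁ ∈ ∑ i, U i,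
      ∃ T₂ : ⨂[Polynomial F] _ : Fin k, (Fin m → Polynomial F),
        (Polynomial.X : Polynomial F) ^ (q - 1) • incl (φ v)
          = T₁ + (Polynomial.X : Polynomial F) ^ q • T₂) ∧
    (∀ v : V, brkLE (φ v) (∑ i, r i)) := by
  have hspan : Submodule.span F S ≤ (degenerationSubmodule (∑ i, U i) q).comap φ :=
    Submodule.span_le.2 hdeg
  have hφ : ∀ v, φ v ∈ degenerationSubmodule (∑ i, U i) q :=
    fun v => hspan (hS ▸ Submodule.mem_top)
  refine ⟨hφ, fun v => ?_⟩
  rcases Nat.eq_zero_or_pos k with rfl | hk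
  · exact brkLE_of_fin_zero (φ v) _
  · obtain ⟨T₁, hT₁, T₂, hT⟩ := hφ v
    exact brkLE_of_degenerates hk hq hT
      (trkR_le_sum_of_mem_sum hk Finset.univ U r (fun i _ => hU i) hT₁)

/-- Lemma `border-basic2`: if every `φ(s)`, `s ∈ S`, degenerates with order `q` to the
sum `U = U₁ + ⋯ + U_N` of `F[ε]`-submodules, each of whose elements is a sum of at most
`r_i` simple `F[ε]`-tensors, then every `φ(v)` degenerates to `U` with order `q`
and `brk(φ(v)) ≤ r₁ + ⋯ + r_N` for all `v ∈ V`. -/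
theorem degeneration_to_submodules_bounds_border_rank
    {F : Type*} [Field F] [IsAlgClosed F] [CharZero F]
    {V : Type*} [AddCommGroup V] [Module F V]
    (S : Set V) (hS : Submodule.span F S = ⊤)
    {m k : ℕ}
    (φ : V →ₗ[F] ⨂[F] _ : Fin k, (Fin m → F))
    (q : ℕ) (hq : 1 ≤ q) (N : ℕ)
    (U : Fin N →
      Submodule (Polynomial F) (⨂[Polynomial F] _ : Fin k, (Fin m → Polynomial F)))
    (r : Fin N → ℕ)
    (hdeg : ∀ s ∈ S, ∃ T₁ ∈ ∑ i, U i,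
      ∃ T₂ : ⨂[Polynomial F] _ : Fin k, (Fin m → Polynomial F),
        (Polynomial.X : Polynomial F) ^ (q - 1) • incl (φ s)
          = T₁ + (Polynomial.X : Polynomial F) ^ q • T₂)
    (hU : ∀ i, ∀ u ∈ U i, trkR u ≤ r i) :
    (∀ v : V, ∃ T₁ ∈ ∑ i, U i,
      ∃ T₂ : ⨂[Polynomial F] _ : Fin k, (Fin m → Polynomial F),
        (Polynomial.X : Polynomial F) ^ (q - 1) • incl (φ v)
          = T₁ + (Polynomial.X : Polynomial F) ^ q • T₂) ∧
    (∀ v : V, brkLE (φ v) (∑ i, r i)) :=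
  degeneration_to_submodules_bounds_border_rank_general S hS φ q hq N U r hdeg hU
end

section
/- Let F be an algebraically closed field of characteristic zero and let ι : P(m,k) → Ten(m,k) be the F-linear embedding of homogeneous degree-k polynomials as symmetric k-tensors, determined by ι(ℓ_1 ℓ_2 ⋯ ℓ_k) = (1/k!) Σ_{σ ∈ S_k} ℓ_{σ(1)} ⊗ ℓ_{σ(2)} ⊗ ⋯ ⊗ ℓ_{σ(k)} for all linear forms ℓ_1,…,ℓ_k (identifying each linear form with its coefficient vector in F^m); in particular ι(ℓ^k) = ℓ ⊗ ℓ ⊗ ⋯ ⊗ ℓ. Then for every f ∈ P(m,k) one has trk(ι(f)) ≤ wrk(f) ≤ 2^{k−1} · trk(ι(f)). -/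
open scoped TensorProduct
open PiTensorProduct MvPolynomial

/-- The tensor rank of `T ∈ (F^m)^{⊗k}`: the least `r` such that `T` is a sum of `r`
simple tensors. -/
noncomputable def trk {F : Type*} [Field F] {m k : ℕ}
    (T : ⨂[F] _ : Fin k, (Fin m → F)) : ℕ :=
  sInf {r : ℕ | ∃ v : Fin r → Fin k → Fin m → F, T = ∑ i, ⨂ₜ[F] j, v i j}

/-- The Waring rank of a polynomial `f` in `m` variables with respect to degree `k`:
the least `r` such that `f` is a sum of `r` k-th powers of linear forms. -/
noncomputable def wrk {F : Type*} [Field F] {m : ℕ} (k : ℕ)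
    (f : MvPolynomial (Fin m) F) : ℕ :=
  sInf {r : ℕ | ∃ ℓ : Fin r → MvPolynomial (Fin m) F,
    (∀ i, (ℓ i).IsHomogeneous 1) ∧ f = ∑ i, (ℓ i) ^ k}

/-!
The multiplication map `Ten(m,k) → P(m,k)`, `v₁ ⊗ ⋯ ⊗ v_k ↦ ℓ_{v₁} ⋯ ℓ_{v_k}`, is a left inverse
of `ι`, because it undoes the symmetrization on products of linear forms and these span `P(m,k)`.
So a Waring decomposition `f = ∑ ℓᵢ^k` gives `ι f = ∑ ℓᵢ ⊗ ⋯ ⊗ ℓᵢ`, while a decomposition of `ι f`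
into `r` simple tensors writes `f` as a sum of `r` products of `k` linear forms. Each such product
is a sum of `2^(k-1)` `k`-th powers of linear forms by the polarization identity
`2^(k-1) k! y₁⋯y_k = ∑_{ε ∈ {±1}^k, ε₁ = 1} ε₁⋯ε_k (ε₁y₁ + ⋯ + ε_ky_k)^k`,
the scalar in front of each power being absorbed into it by taking a `k`-th root in `F`.
-/

lemma PiTensorProduct.exists_eq_sum_tprod {R ι : Type*} [CommSemiring R] [DecidableEq ι]
    [Nonempty ι] {M : ι → Type*} [∀ i, AddCommMonoid (M i)] [∀ i, Module R (M i)]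
    (T : ⨂[R] i, M i) : ∃ (r : ℕ) (v : Fin r → ∀ i, M i), T = ∑ n, tprod R (v n) := by
  induction T using PiTensorProduct.induction_on with
  | smul_tprod c v =>
    obtain ⟨i₀⟩ := ‹Nonempty ι›
    refine ⟨1, fun _ => Function.update v i₀ (c • v i₀), ?_⟩
    rw [Fin.sum_univ_one, MultilinearMap.map_update_smul, Function.update_eq_self]
  | add S T hS hT =>
    obtain ⟨r, v, rfl⟩ := hS
    obtain ⟨s, w, rfl⟩ := hT
    exact ⟨r + s, Fin.append v w, by simp [Fin.sum_univ_add]⟩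

section LinearForms

variable {F σ : Type*} [Field F] [Fintype σ]

noncomputable def linearForm : (σ → F) →ₗ[F] MvPolynomial σ F :=
  Fintype.linearCombination F X

lemma linearForm_apply (c : σ → F) : linearForm c = ∑ x, C (c x) * X x := by
  simp [linearForm, Fintype.linearCombination_apply, C_mul']

lemma range_linearForm :
    LinearMap.range (linearForm : (σ → F) →ₗ[F] _) = homogeneousSubmodule σ F 1 := by
  rw [linearForm, Fintype.range_linearCombination, homogeneousSubmodule_one_eq_span_X]

lemma span_range_prod_linearForm (k : ℕ) :
    Submodule.span F (Set.range fun c : Fin k → σ → F => ∏ j, linearForm (c j)) =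
      homogeneousSubmodule σ F k := by
  rw [← homogeneousSubmodule_one_pow, Submodule.pow_eq_span_pow_set, ← range_linearForm]
  congr 1
  ext p
  simp only [Set.mem_range, Set.mem_pow, List.prod_ofFn]
  constructor
  · rintro ⟨c, rfl⟩
    exact ⟨fun j => ⟨_, c j, rfl⟩, rfl⟩
  · rintro ⟨f, rfl⟩
    choose c hc using fun j => (f j).2
    exact ⟨c, by simp only [hc]⟩

lemma isHomogeneous_linearForm (c : σ → F) : (linearForm c).IsHomogeneous 1 := by
  rw [← mem_homogeneousSubmodule, ← range_linearForm]
  exact LinearMap.mem_range_self _ c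

lemma prod_linearForm_mem {k : ℕ} (c : Fin k → σ → F) :
    ∏ j, linearForm (c j) ∈ homogeneousSubmodule σ F k :=
  span_range_prod_linearForm (F := F) (σ := σ) k ▸ Submodule.subset_span ⟨c, rfl⟩

lemma span_range_prod_linearForm_eq_top (k : ℕ) :
    Submodule.span F (Set.range fun c : Fin k → σ → F =>
      (⟨_, prod_linearForm_mem c⟩ : homogeneousSubmodule σ F k)) = ⊤ := by
  apply Submodule.map_injective_of_injective (homogeneousSubmodule σ F k).injective_subtype
  rw [Submodule.map_span, Submodule.map_top, Submodule.range_subtype, ← Set.range_comp]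
  exact span_range_prod_linearForm k

end LinearForms

section Symmetrization

variable {F σ : Type*} [Field F] [Fintype σ] {k : ℕ}

lemma inv_factorial_smul_sum_perm {M : Type*} [AddCommGroup M] [Module F M] [CharZero F]
    (x : M) : ((k.factorial : F))⁻¹ • ∑ _τ : Equiv.Perm (Fin k), x = x := by
  rw [Finset.sum_const, Finset.card_univ, Fintype.card_perm, Fintype.card_fin,
    ← Nat.cast_smul_eq_nsmul F, smul_smul, inv_mul_cancel₀ (Nat.cast_ne_zero.2 k.factorial_ne_zero),
    one_smul]

variable (F σ k) in
noncomputable def polyOfTensor : (⨂[F] _ : Fin k, (σ → F)) →ₗ[F] MvPolynomial σ F :=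
  PiTensorProduct.lift
    ((MultilinearMap.mkPiAlgebra F (Fin k) (MvPolynomial σ F)).compLinearMap fun _ => linearForm)

lemma polyOfTensor_tprod (v : Fin k → σ → F) :
    polyOfTensor F σ k (⨂ₜ[F] j, v j) = ∏ j, linearForm (v j) := by
  simp [polyOfTensor]

def IsSymmetrization (ι : homogeneousSubmodule σ F k →ₗ[F] ⨂[F] _ : Fin k, (σ → F)) : Prop :=
  ∀ c : Fin k → σ → F,
    ι ⟨_, prod_linearForm_mem c⟩ =
      ((k.factorial : F))⁻¹ • ∑ τ : Equiv.Perm (Fin k), ⨂ₜ[F] j, c (τ j)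

namespace IsSymmetrization

variable [CharZero F] {ι : homogeneousSubmodule σ F k →ₗ[F] ⨂[F] _ : Fin k, (σ → F)}

lemma polyOfTensor_comp (hι : IsSymmetrization ι) :
    polyOfTensor F σ k ∘ₗ ι = (homogeneousSubmodule σ F k).subtype := by
  refine LinearMap.ext_on_range (span_range_prod_linearForm_eq_top k) fun c => ?_
  simp only [LinearMap.comp_apply, hι c, map_smul, map_sum, polyOfTensor_tprod,
    fun τ : Equiv.Perm (Fin k) => Equiv.prod_comp τ fun j => linearForm (c j),
    inv_factorial_smul_sum_perm]
  rfl

lemma apply_pow (hι : IsSymmetrization ι) (c : σ → F)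
    (hmem : linearForm c ^ k ∈ homogeneousSubmodule σ F k) :
    ι ⟨_, hmem⟩ = ⨂ₜ[F] _ : Fin k, c := by
  have hprod : (⟨_, hmem⟩ : homogeneousSubmodule σ F k) = ⟨_, prod_linearForm_mem fun _ => c⟩ :=
    Subtype.ext (Fin.prod_const k _).symm
  rw [hprod, hι, inv_factorial_smul_sum_perm]

lemma coe_eq_sum_prod (hι : IsSymmetrization ι) {f : homogeneousSubmodule σ F k} {r : ℕ}
    {v : Fin r → Fin k → σ → F} (hv : ι f = ∑ i, ⨂ₜ[F] j, v i j) :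
    (f : MvPolynomial σ F) = ∑ i, ∏ j, linearForm (v i j) := by
  rw [← (homogeneousSubmodule σ F k).subtype_apply, ← hι.polyOfTensor_comp, LinearMap.comp_apply,
    hv, map_sum]
  simp only [polyOfTensor_tprod]

lemma apply_eq_sum_tprod (hι : IsSymmetrization ι) {f : homogeneousSubmodule σ F k} {r : ℕ}
    {c : Fin r → σ → F} (hf : (f : MvPolynomial σ F) = ∑ i, linearForm (c i) ^ k) :
    ι f = ∑ i, ⨂ₜ[F] _ : Fin k, c i := by
  have hmem : ∀ i, linearForm (c i) ^ k ∈ homogeneousSubmodule σ F k := fun i => by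
    simpa using (isHomogeneous_linearForm (c i)).pow k
  rw [show f = ∑ i, ⟨_, hmem i⟩ from Subtype.ext (by simp [hf]), map_sum]
  simp only [hι.apply_pow]

end IsSymmetrization

end Symmetrization

section Polarization

variable {R : Type*} [CommRing R] {k : ℕ}

def polarizationTerm (ε : Fin k → ℤˣ) (y : Fin k → R) : R :=
  (∏ j, (ε j : R)) * (∑ j, (ε j : R) * y j) ^ k

lemma polarizationTerm_neg (ε : Fin k → ℤˣ) (y : Fin k → R) :
    polarizationTerm (-ε) y = polarizationTerm ε y := by
  have hsq : ((-1 : R) ^ k) * (-1) ^ k = 1 := by rw [← mul_pow]; simp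
  simp only [polarizationTerm, Pi.neg_apply, Units.val_neg, Int.cast_neg, neg_mul,
    Finset.prod_neg, Finset.sum_neg_distrib, neg_pow (∑ j, _), Finset.card_univ, Fintype.card_fin]
  linear_combination (∏ j, (ε j : R)) * (∑ j, (ε j : R) * y j) ^ k * hsq

lemma sum_sign_mul_prod_eq_zero_of_not_surjective {g : Fin k → Fin k} (hg : ¬ g.Surjective)
    (y : Fin k → R) :
    ∑ ε : Fin k → ℤˣ, (∏ j, (ε j : R)) * ∏ i, ((ε (g i) : R) * y (g i)) = 0 := by
  obtain ⟨j₀, hj₀⟩ : ∃ j₀, ∀ i, g i ≠ j₀ := by simpa [Function.Surjective] using hg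
  set t : Fin k → ℤˣ := Pi.mulSingle j₀ (-1)
  have ht : t ≠ 1 := fun h => by simpa [t] using congr_fun h j₀
  refine Finset.sum_ninvolution (· * t) (fun ε => ?_) (fun ε _ => by simpa using ht)
    (fun _ => Finset.mem_univ _) (fun ε => ?_)
  · have hfix : ∀ i, (ε * t) (g i) = ε (g i) := fun i => by simp [t, hj₀ i]
    have hsign : ∏ j, ((ε * t) j : R) = -∏ j, (ε j : R) := by
      have ht_prod : ∏ j, (t j : R) = -1 :=
        (Fintype.prod_eq_single j₀ fun j hj => by simp [t, hj]).trans (by simp [t])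
      simp only [Pi.mul_apply, Units.val_mul, Int.cast_mul, Finset.prod_mul_distrib, ht_prod,
        mul_neg_one]
    simp only [hfix, hsign]
    ring
  · rw [mul_assoc, ← Pi.mulSingle_mul, neg_mul_neg, one_mul, Pi.mulSingle_one, mul_one]

lemma sum_polarizationTerm (y : Fin k → R) :
    ∑ ε, polarizationTerm ε y = (2 ^ k * k.factorial) • ∏ j, y j := by
  have hperm : ∀ (τ : Equiv.Perm (Fin k)) (ε : Fin k → ℤˣ),
      (∏ j, (ε j : R)) * ∏ i, ((ε (τ i) : R) * y (τ i)) = ∏ j, y j := by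
    intro τ ε
    rw [Finset.prod_mul_distrib, Equiv.prod_comp τ (fun j => (ε j : R)), Equiv.prod_comp τ y,
      ← mul_assoc, ← Finset.prod_mul_distrib]
    simp [← Int.cast_mul, ← Units.val_mul, Int.units_mul_self]
  simp_rw [polarizationTerm, Fintype.sum_pow, Finset.mul_sum]
  rw [Finset.sum_comm]
  calc _ = ∑ τ : Equiv.Perm (Fin k), ∑ ε : Fin k → ℤˣ,
        (∏ j, (ε j : R)) * ∏ i, ((ε (τ i) : R) * y (τ i)) := by
        refine (Fintype.sum_of_injective _ DFunLike.coe_injective _ _ (fun g hg => ?_)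
          fun _ => rfl).symm
        refine sum_sign_mul_prod_eq_zero_of_not_surjective (fun hsurj => hg ?_) y
        exact ⟨Equiv.ofBijective g ⟨Finite.injective_iff_surjective.2 hsurj, hsurj⟩, rfl⟩
    _ = _ := by
        simp only [hperm, Finset.sum_const, Finset.card_univ, Fintype.card_fun,
          Fintype.card_units_int, Fintype.card_fin, Fintype.card_perm, smul_smul]
        rw [mul_comm]

lemma sum_sign_eq_two_nsmul_sum_cons_one {M : Type*} [AddCommMonoid M] {K : ℕ}
    (φ : (Fin (K + 1) → ℤˣ) → M) (hφ : ∀ ε, φ (-ε) = φ ε) :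
    ∑ ε, φ ε = 2 • ∑ δ : Fin K → ℤˣ, φ (Fin.cons 1 δ) := by
  have hneg : ∑ δ : Fin K → ℤˣ, φ (Fin.cons (-1) δ) = ∑ δ : Fin K → ℤˣ, φ (Fin.cons 1 δ) := by
    rw [← Equiv.sum_comp (Equiv.neg _)]
    refine Finset.sum_congr rfl fun δ _ => ?_
    rw [← hφ]
    congr 1
    ext i : 1
    cases i using Fin.cases <;> simp
  rw [← (Fin.consEquiv fun _ => ℤˣ).sum_comp, Fintype.sum_prod_type, UnitsInt.univ,
    Finset.sum_pair (by decide), two_nsmul]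
  exact congrArg₂ (· + ·) rfl hneg

lemma two_nsmul_sum_polarizationTerm_cons_one {K : ℕ} (y : Fin (K + 1) → R) :
    2 • ∑ δ : Fin K → ℤˣ, polarizationTerm (Fin.cons 1 δ) y =
      (2 ^ (K + 1) * (K + 1).factorial) • ∏ j, y j := by
  rw [← sum_sign_eq_two_nsmul_sum_cons_one (polarizationTerm · y) (polarizationTerm_neg · y),
    sum_polarizationTerm]

end Polarization

lemma exists_prod_eq_sum_pow {F A : Type*} [Field F] [IsAlgClosed F] [CharZero F] [CommRing A]
    [Algebra F A] {k : ℕ} (hk : 0 < k) (y : Fin k → A) :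
    ∃ a : Fin (2 ^ (k - 1)) → Fin k → F, ∏ j, y j = ∑ i, (∑ j, a i j • y j) ^ k := by
  obtain ⟨K, rfl⟩ : ∃ K, k = K + 1 := ⟨k - 1, by omega⟩
  rw [Nat.add_sub_cancel]
  set N : ℕ := 2 ^ (K + 1) * (K + 1).factorial
  set ε : (Fin K → ℤˣ) → Fin (K + 1) → ℤˣ := fun δ => Fin.cons 1 δ
  choose d hd using fun δ => IsAlgClosed.exists_pow_nat_eq
    (2 * (N : F)⁻¹ * ∏ j, (ε δ j : F)) K.succ_pos
  have hterm : ∀ δ, (∑ j, (d δ * (ε δ j : F)) • y j) ^ (K + 1) =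
      (N : F)⁻¹ • 2 • polarizationTerm (ε δ) y := by
    intro δ
    simp only [polarizationTerm, mul_smul, ← Finset.smul_sum, smul_pow, hd, ← Int.cast_prod,
      Int.cast_smul_eq_zsmul, zsmul_eq_mul]
    rw [two_smul, two_nsmul, smul_add]
  have hcard : Fintype.card (Fin K → ℤˣ) = 2 ^ K := by simp [Fintype.card_units_int]
  set e := Fintype.equivFinOfCardEq hcard
  refine ⟨fun i j => d (e.symm i) * (ε (e.symm i) j : F), ?_⟩
  rw [Equiv.sum_comp e.symm fun δ => (∑ j, (d δ * (ε δ j : F)) • y j) ^ (K + 1),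
    Finset.sum_congr rfl fun δ _ => hterm δ, ← Finset.smul_sum, ← Finset.smul_sum,
    two_nsmul_sum_polarizationTerm_cons_one, ← Nat.cast_smul_eq_nsmul F, smul_smul,
    inv_mul_cancel₀ (Nat.cast_ne_zero.2 (by positivity)), one_smul]

lemma exists_eq_sum_pow_of_eq_sum_prod {F σ : Type*} [Field F] [IsAlgClosed F] [CharZero F]
    {k r : ℕ} (hk : 0 < k) {p : MvPolynomial σ F} (ℓ : Fin r → Fin k → MvPolynomial σ F)
    (hℓ : ∀ i j, (ℓ i j).IsHomogeneous 1) (hp : p = ∑ i, ∏ j, ℓ i j) :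
    ∃ z : Fin (2 ^ (k - 1) * r) → MvPolynomial σ F,
      (∀ t, (z t).IsHomogeneous 1) ∧ p = ∑ t, z t ^ k := by
  choose a ha using fun i => exists_prod_eq_sum_pow (F := F) hk (ℓ i)
  set z : Fin (2 ^ (k - 1)) × Fin r → MvPolynomial σ F := fun si => ∑ j, a si.2 si.1 j • ℓ si.2 j
  refine ⟨z ∘ finProdFinEquiv.symm, fun t => ?_, ?_⟩
  · show z _ ∈ homogeneousSubmodule σ F 1
    exact Submodule.sum_mem _ fun j _ => Submodule.smul_mem _ _ (hℓ _ j)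
  · rw [Function.comp_def, Equiv.sum_comp finProdFinEquiv.symm (fun si => z si ^ k),
      Fintype.sum_prod_type, Finset.sum_comm, hp]
    exact Finset.sum_congr rfl fun i _ => ha i

section Ranks

variable {F : Type*} [Field F] {m k : ℕ}

lemma trk_le {T : ⨂[F] _ : Fin k, (Fin m → F)} {r : ℕ} {v : Fin r → Fin k → Fin m → F}
    (hT : T = ∑ i, ⨂ₜ[F] j, v i j) : trk T ≤ r :=
  Nat.sInf_le ⟨v, hT⟩

lemma exists_eq_sum_tprod_trk (hk : 0 < k) (T : ⨂[F] _ : Fin k, (Fin m → F)) :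
    ∃ v : Fin (trk T) → Fin k → Fin m → F, T = ∑ i, ⨂ₜ[F] j, v i j :=
  have : Nonempty (Fin k) := ⟨⟨0, hk⟩⟩
  Nat.sInf_mem (PiTensorProduct.exists_eq_sum_tprod T)

lemma wrk_le {f : MvPolynomial (Fin m) F} {r : ℕ} {ℓ : Fin r → MvPolynomial (Fin m) F}
    (hℓ : ∀ i, (ℓ i).IsHomogeneous 1) (hf : f = ∑ i, ℓ i ^ k) : wrk k f ≤ r :=
  Nat.sInf_le ⟨ℓ, hℓ, hf⟩

lemma exists_eq_sum_pow_wrk {f : MvPolynomial (Fin m) F} {r : ℕ}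
    {ℓ : Fin r → MvPolynomial (Fin m) F} (hℓ : ∀ i, (ℓ i).IsHomogeneous 1)
    (hf : f = ∑ i, ℓ i ^ k) :
    ∃ ℓ' : Fin (wrk k f) → MvPolynomial (Fin m) F,
      (∀ i, (ℓ' i).IsHomogeneous 1) ∧ f = ∑ i, ℓ' i ^ k :=
  Nat.sInf_mem (s := {r | ∃ ℓ : Fin r → MvPolynomial (Fin m) F,
    (∀ i, (ℓ i).IsHomogeneous 1) ∧ f = ∑ i, ℓ i ^ k}) ⟨r, ℓ, hℓ, hf⟩

end Ranks

theorem waring_rank_vs_tensor_rank_of_symmetrization_general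
    {F : Type*} [Field F] [IsAlgClosed F] [CharZero F] {m k : ℕ}
    (hk : 0 < k)
    (ι : (MvPolynomial.homogeneousSubmodule (Fin m) F k) →ₗ[F]
          (⨂[F] _ : Fin k, (Fin m → F)))
    (hformula : ∀ c : Fin k → Fin m → F,
      ∀ hmem : (∏ j : Fin k, ∑ x : Fin m, C (c j x) * X x)
          ∈ MvPolynomial.homogeneousSubmodule (Fin m) F k,
        ι ⟨∏ j : Fin k, ∑ x : Fin m, C (c j x) * X x, hmem⟩
          = ((k.factorial : F))⁻¹ • ∑ σ : Equiv.Perm (Fin k), ⨂ₜ[F] j, c (σ j))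
    (f : MvPolynomial.homogeneousSubmodule (Fin m) F k) :
    trk (ι f) ≤ wrk k (f : MvPolynomial (Fin m) F) ∧
      wrk k (f : MvPolynomial (Fin m) F) ≤ 2 ^ (k - 1) * trk (ι f) := by
  have hι : IsSymmetrization ι := fun c => by
    convert hformula c (by simpa only [linearForm_apply] using prod_linearForm_mem c) using 3
    simp only [linearForm_apply]
  obtain ⟨v, hv⟩ := exists_eq_sum_tprod_trk hk (ι f)
  obtain ⟨ℓ, hℓ, hfℓ⟩ := exists_eq_sum_pow_of_eq_sum_prod hk (fun i j => linearForm (v i j))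
    (fun _ _ => isHomogeneous_linearForm _) (hι.coe_eq_sum_prod hv)
  refine ⟨?_, wrk_le hℓ hfℓ⟩
  obtain ⟨ℓ', hℓ', hfℓ'⟩ := exists_eq_sum_pow_wrk hℓ hfℓ
  choose c hc using fun i => LinearMap.mem_range.1 ((range_linearForm (σ := Fin m)).ge (hℓ' i))
  exact trk_le (hι.apply_eq_sum_tprod (c := c) (by simp only [hfℓ', hc]))

/-- Comparison of Waring rank and tensor rank under the symmetrization embedding
`ι : P(m,k) → Ten(m,k)`, the `F`-linear embedding determined by
`ι(ℓ₁⋯ℓ_k) = (1/k!) ∑_{σ ∈ S_k} ℓ_{σ(1)} ⊗ ⋯ ⊗ ℓ_{σ(k)}` for linear forms `ℓ_j`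
(each identified with its coefficient vector `c j ∈ F^m`):
`trk(ι f) ≤ wrk(f) ≤ 2^(k-1) · trk(ι f)`. -/
theorem waring_rank_vs_tensor_rank_of_symmetrization
    {F : Type*} [Field F] [IsAlgClosed F] [CharZero F] {m k : ℕ}
    (hm : 0 < m) (hk : 0 < k)
    (ι : (MvPolynomial.homogeneousSubmodule (Fin m) F k) →ₗ[F]
          (⨂[F] _ : Fin k, (Fin m → F)))
    (hinj : Function.Injective ι)
    (hformula : ∀ c : Fin k → Fin m → F,
      ∀ hmem : (∏ j : Fin k, ∑ x : Fin m, C (c j x) * X x)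
          ∈ MvPolynomial.homogeneousSubmodule (Fin m) F k,
        ι ⟨∏ j : Fin k, ∑ x : Fin m, C (c j x) * X x, hmem⟩
          = ((k.factorial : F))⁻¹ • ∑ σ : Equiv.Perm (Fin k), ⨂ₜ[F] j, c (σ j))
    (f : MvPolynomial.homogeneousSubmodule (Fin m) F k) :
    trk (ι f) ≤ wrk k (f : MvPolynomial (Fin m) F) ∧
      wrk k (f : MvPolynomial (Fin m) F) ≤ 2 ^ (k - 1) * trk (ι f) :=
  waring_rank_vs_tensor_rank_of_symmetrization_general hk ι hformula f
end

section
/- Let F be an infinite field and K an extension field of F. For a field E, let I_{E,r} denote the ideal of the polynomial ring E[x_α : α ∈ [n]^d] (one variable for each coordinate of a tensor in Ten_E(n,d)) consisting of all polynomials that vanish at every tensor over E of tensor rank at most r. Then I_{K,r} equals the K-linear span of I_{F,r} inside K[x_α] (equivalently, the extension of I_{F,r} along the inclusion F[x_α] ⊆ K[x_α]); in particular, any set of generators of the ideal I_{F,r} also generates the ideal I_{K,r}, so the equations for border rank over K are defined by polynomials with coefficients in F. -/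
/-!
Substituting the generic rank-`r` tensor, with the entries of its `r * d` factor vectors as
indeterminates, identifies `I_{E,r}` with the kernel of an `E`-algebra map `E[x_α] → E[v]`,
because over an infinite field a polynomial vanishing everywhere is zero. The substitution has
integer coefficients, so the map for `K` is the base change of the map for `F`, and kernels
commute with the flat base change `K ⊗_F -`.
-/

/-- The ideal `I_{E,r}` of polynomials in the tensor coordinates (indexed by
multi-indices `[n]^d`) that vanish at every tensor over `E` of tensor rank at most `r`;
a tensor of rank at most `r` is a sum of `r` simple tensors, whose coordinate at the
multi-index `f` is `∑_t ∏_j v_t j (f j)`. -/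
def vanishingIdealOfRank (E : Type*) [Field E] (n d r : ℕ) :
    Ideal (MvPolynomial (Fin d → Fin n) E) where
  carrier := {P | ∀ v : Fin r → Fin d → Fin n → E,
    MvPolynomial.eval (fun f => ∑ t, ∏ j, v t j (f j)) P = 0}
  add_mem' := by
    intro a b ha hb v
    simp [ha v, hb v]
  zero_mem' := by
    intro v
    simp
  smul_mem' := by
    intro c a ha v
    simp [smul_eq_mul, ha v]

open MvPolynomial TensorProduct

section FlatBaseChange

variable {R A σ τ : Type*} [CommRing R] [CommRing A] [Algebra R A]

lemma MvPolynomial.algebraTensorAlgEquiv_lTensor_bind₁ (g : σ → MvPolynomial τ R)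
    (x : A ⊗[R] MvPolynomial σ R) :
    algebraTensorAlgEquiv R A ((bind₁ g).toLinearMap.lTensor A x)
      = bind₁ (fun i => map (algebraMap R A) (g i)) (algebraTensorAlgEquiv R A x) := by
  induction x using TensorProduct.induction_on with
  | zero => simp
  | tmul a p => simp [map_bind₁]
  | add x y hx hy => simp only [map_add, hx, hy]

theorem MvPolynomial.ker_bind₁_map_algebraMap [Module.Flat R A] (g : σ → MvPolynomial τ R) :
    RingHom.ker (bind₁ fun i => map (algebraMap R A) (g i)) =
      Ideal.map (map (algebraMap R A)) (RingHom.ker (bind₁ g)) := by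
  refine le_antisymm (fun P hP => ?_) ?_
  · let e := algebraTensorAlgEquiv (σ := σ) R A
    have hexact := Module.Flat.lTensor_exact A
      (LinearMap.exact_subtype_ker_map (bind₁ g).toLinearMap)
    have hker : (bind₁ g).toLinearMap.lTensor A (e.symm P) = 0 := by
      apply (algebraTensorAlgEquiv (σ := τ) R A).injective
      rw [algebraTensorAlgEquiv_lTensor_bind₁ g, e.apply_symm_apply, map_zero]
      exact hP
    obtain ⟨y, hy⟩ := (hexact _).mp hker
    rw [← e.apply_symm_apply P, ← hy]
    clear hy
    induction y using TensorProduct.induction_on with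
    | zero => simp
    | tmul a q =>
      rw [LinearMap.lTensor_tmul, algebraTensorAlgEquiv_tmul, smul_eq_C_mul]
      exact Ideal.mul_mem_left _ _ (Ideal.mem_map_of_mem _ q.2)
    | add x y hx hy => simpa only [map_add] using add_mem hx hy
  · rw [Ideal.map_le_iff_le_comap]
    intro p hp
    rw [Ideal.mem_comap, RingHom.mem_ker, ← map_bind₁, RingHom.mem_ker.mp hp, map_zero]

end FlatBaseChange

section GenericTensor

/-- The variable `(t, j, k)` is the `k`-th coordinate of the `j`-th factor of the `t`-th simple
tensor. -/
noncomputable def genericRankTensor (E : Type*) [CommSemiring E] (n d r : ℕ) :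
    (Fin d → Fin n) → MvPolynomial (Fin r × Fin d × Fin n) E :=
  fun f => ∑ t, ∏ j, X (t, j, f j)

variable {E : Type*} {n d r : ℕ}

lemma map_genericRankTensor {S : Type*} [CommSemiring E] [CommSemiring S] (φ : E →+* S)
    (f : Fin d → Fin n) :
    map φ (genericRankTensor E n d r f) = genericRankTensor S n d r f := by
  simp [genericRankTensor]

lemma eval_bind₁_genericRankTensor [CommSemiring E] (w : Fin r × Fin d × Fin n → E)
    (P : MvPolynomial (Fin d → Fin n) E) :
    eval w (bind₁ (genericRankTensor E n d r) P)
      = eval (fun f => ∑ t, ∏ j, w (t, j, f j)) P := by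
  rw [← aeval_eq_eval, aeval_bind₁]
  simp [aeval_eq_eval, genericRankTensor]

lemma vanishingIdealOfRank_eq_ker [Field E] [Infinite E] :
    vanishingIdealOfRank E n d r = RingHom.ker (bind₁ (genericRankTensor E n d r)) := by
  ext P
  refine ⟨fun hP => MvPolynomial.funext fun w => ?_, fun hP v => ?_⟩
  · rw [map_zero, eval_bind₁_genericRankTensor]
    exact hP fun t j k => w (t, j, k)
  · simpa [eval_bind₁_genericRankTensor] using
      congrArg (eval fun p : Fin r × Fin d × Fin n => v p.1 p.2.1 p.2.2) (RingHom.mem_ker.mp hP)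

end GenericTensor

/-- Proposition `field.ind`: the equations for border rank are defined over the base
field: for an infinite field `F` and an extension field `K` of `F`, the ideal `I_{K,r}`
is the extension (the `K`-linear span) of `I_{F,r}` along `F[x_α] ⊆ K[x_α]`. -/
theorem vanishing_ideal_of_rank_base_change
    (F : Type*) [Field F] [Infinite F]
    (K : Type*) [Field K] [Algebra F K]
    (n d r : ℕ) :
    Ideal.map (MvPolynomial.map (algebraMap F K)) (vanishingIdealOfRank F n d r)
      = vanishingIdealOfRank K n d r := by
  have : Infinite K := Infinite.of_injective _ (algebraMap F K).injective
  simp_rw [vanishingIdealOfRank_eq_ker, ← ker_bind₁_map_algebraMap, map_genericRankTensor]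
end

section
/- Let F be an infinite field, let z = (z_1,…,z_m) be indeterminates, and let L(z) ∈ Ten_{F[z]}(n,d) be a polynomial tensor, i.e., a tensor each of whose n^d entries is a polynomial in F[z_1,…,z_m]. Suppose that for every β ∈ F^m the tensor L(β) ∈ Ten_F(n,d) has border rank at most r over F. Then L(z), regarded as a tensor over the rational function field F(z), has border rank at most r over F(z), and moreover L(z) has border rank at most r over the algebraic closure of F(z). -/
/-- `x` (the coordinate vector of a tensor in `Ten_E(n,d)`, indexed by multi-indices
`[n]^d`) has border rank at most `r` over `E`: every polynomial in the tensor
coordinates with coefficients in `E` that vanishes on all tensors over `E` of rank at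
most `r` also vanishes at `x`.  The coordinate vector of a sum of `r` simple tensors is
`f ↦ ∑_t ∏_j v_t j (f j)`. -/
def brkCoordLE (E : Type*) [Field E] {n d : ℕ} (x : (Fin d → Fin n) → E) (r : ℕ) :
    Prop :=
  ∀ P : MvPolynomial (Fin d → Fin n) E,
    (∀ v : Fin r → Fin d → Fin n → E,
      MvPolynomial.eval (fun f => ∑ t, ∏ j, v t j (f j)) P = 0) →
    MvPolynomial.eval x P = 0

open MvPolynomial

lemma comm_eval {R S σ : Type*} [CommSemiring R] [CommSemiring S]
    (g : R →+* S) (y : σ → R) (Q : MvPolynomial σ R) :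
    g (eval y Q) = eval (fun s => g (y s)) (map g Q) := by
  rw [eval_map]
  have := eval₂_comp_left g (RingHom.id R) y Q
  rw [RingHom.comp_id] at this
  exact this

lemma eval_lin {K Ω σ : Type*} [Field K] [Field Ω] [Algebra K Ω]
    (φ : Ω →ₗ[K] K) (P : MvPolynomial σ Ω) (x : σ → K) :
    eval x (∑ s ∈ P.support, monomial s (φ (P.coeff s))) =
      φ (eval (fun j => algebraMap K Ω (x j)) P) := by
  rw [map_sum, eval_eq, map_sum]
  refine Finset.sum_congr rfl fun s hs => ?_
  rw [eval_monomial]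
  have h1 : P.coeff s * ∏ i ∈ s.support, (algebraMap K Ω (x i)) ^ s i
      = (∏ i ∈ s.support, (x i) ^ s i) • P.coeff s := by
    rw [Algebra.smul_def, mul_comm, map_prod]
    simp [map_pow]
  rw [h1, map_smul, smul_eq_mul, mul_comm]
  rfl

lemma part1 {F : Type*} [Field F] [Infinite F] {n d m r : ℕ}
    (K : Type*) [Field K] [Algebra (MvPolynomial (Fin m) F) K]
    [IsFractionRing (MvPolynomial (Fin m) F) K]
    (Lc : (Fin d → Fin n) → MvPolynomial (Fin m) F)
    (hβ : ∀ β : Fin m → F, brkCoordLE F (fun f => MvPolynomial.eval β (Lc f)) r) :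
    brkCoordLE K (fun f => algebraMap (MvPolynomial (Fin m) F) K (Lc f)) r := by
  classical
  set ι := algebraMap (MvPolynomial (Fin m) F) K with hι
  intro P hP
  obtain ⟨b, hb⟩ := IsLocalization.exist_integer_multiples (nonZeroDivisors (MvPolynomial (Fin m) F))
    P.support (fun s => P.coeff s)
  let q : ((Fin d → Fin n) →₀ ℕ) → MvPolynomial (Fin m) F := fun s =>
    if hs : s ∈ P.support then (hb s hs).choose else 0
  have hq : ∀ s ∈ P.support, ι (q s) = (b : MvPolynomial (Fin m) F) • P.coeff s := fun s hs => by
    simp only [q, dif_pos hs]; exact (hb s hs).choose_spec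
  let Q := ∑ s ∈ P.support, monomial s (q s)
  have hQc : ∀ s, Q.coeff s = q s * (if s ∈ P.support then 1 else 0) := by
    intro s
    simp only [Q, coeff_sum, coeff_monomial]
    rw [Finset.sum_ite_eq' P.support s q]
    split <;> simp
  clear_value q Q
  have hmapQ : MvPolynomial.map ι Q = MvPolynomial.C (ι b) * P := by
    ext s
    rw [coeff_map, coeff_C_mul, hQc]
    by_cases hs : s ∈ P.support
    · rw [if_pos hs, mul_one, hq s hs, Algebra.smul_def]
    · rw [if_neg hs, mul_zero, map_zero,
        MvPolynomial.notMem_support_iff.mp hs, mul_zero]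
  have key : ∀ y : (Fin d → Fin n) → MvPolynomial (Fin m) F,
      ι (eval y Q) = ι b * eval (fun f => ι (y f)) P := by
    intro y
    rw [comm_eval ι y Q, hmapQ, eval_mul, eval_C]
  have hQv : ∀ v : Fin r → Fin d → Fin n → F,
      eval (fun f => MvPolynomial.C (∑ t, ∏ j, v t j (f j)) : _ → MvPolynomial (Fin m) F) Q = 0 := by
    intro v
    have hpt : (fun f : Fin d → Fin n => ι (MvPolynomial.C (∑ t, ∏ j, v t j (f j))))
        = fun f => ∑ t, ∏ j, ι (MvPolynomial.C (v t j (f j))) := by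
      funext f
      rw [map_sum, map_sum]
      exact Finset.sum_congr rfl fun t _ => by rw [map_prod, map_prod]
    have h0 : eval (fun f => ι (MvPolynomial.C (∑ t, ∏ j, v t j (f j)))) P = 0 := by
      rw [hpt]; exact hP (fun t j i => ι (MvPolynomial.C (v t j i)))
    have := key (fun f => MvPolynomial.C (∑ t, ∏ j, v t j (f j)))
    rw [h0, mul_zero] at this
    exact (map_eq_zero_iff ι (IsFractionRing.injective _ _)).mp this
  have hg : ∀ β : Fin m → F, MvPolynomial.eval β (eval Lc Q) = 0 := by
    intro β
    have hPβ : ∀ v : Fin r → Fin d → Fin n → F,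
        eval (fun f => ∑ t, ∏ j, v t j (f j))
          (MvPolynomial.map (MvPolynomial.eval β) Q) = 0 := by
      intro v
      have h1 := comm_eval (MvPolynomial.eval β)
        (fun f => MvPolynomial.C (∑ t, ∏ j, v t j (f j)) : _ → MvPolynomial (Fin m) F) Q
      rw [hQv v, map_zero] at h1
      have hpt : (fun s : Fin d → Fin n =>
          MvPolynomial.eval β (MvPolynomial.C (∑ t, ∏ j, v t j (s j)) : MvPolynomial (Fin m) F))
          = fun s => ∑ t, ∏ j, v t j (s j) := by
        funext s; rw [MvPolynomial.eval_C]
      rw [hpt] at h1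
      exact h1.symm
    have h2 := hβ β (MvPolynomial.map (MvPolynomial.eval β) Q) hPβ
    have h3 := comm_eval (MvPolynomial.eval β) Lc Q
    rw [h3]
    exact h2
  have hg0 : eval Lc Q = 0 := by
    apply MvPolynomial.funext
    intro x
    rw [hg x, map_zero]
  have hk := key Lc
  rw [hg0, map_zero] at hk
  have hb0 : ι (b : MvPolynomial (Fin m) F) ≠ 0 := by
    have hbne : (b : MvPolynomial (Fin m) F) ≠ 0 := nonZeroDivisors.coe_ne_zero b
    exact fun h => hbne ((map_eq_zero_iff ι (IsFractionRing.injective _ _)).mp h)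
  exact (mul_eq_zero.mp hk.symm).resolve_left hb0

lemma part2 {K Ω : Type*} [Field K] [Field Ω] [Algebra K Ω] {n d r : ℕ}
    (x : (Fin d → Fin n) → K) (hx : brkCoordLE K x r) :
    brkCoordLE Ω (fun f => algebraMap K Ω (x f)) r := by
  classical
  intro P hP
  rw [← Module.forall_dual_apply_eq_zero_iff K]
  intro φ
  rw [← eval_lin φ P x]
  apply hx
  intro v
  rw [eval_lin φ P (fun f => ∑ t, ∏ j, v t j (f j))]
  have hpt : (fun f : Fin d → Fin n => algebraMap K Ω (∑ t, ∏ j, v t j (f j)))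
      = fun f => ∑ t, ∏ j, algebraMap K Ω (v t j (f j)) := by
    funext f
    rw [map_sum]
    exact Finset.sum_congr rfl fun t _ => map_prod _ _ _
  rw [hpt, hP (fun t j i => algebraMap K Ω (v t j i)), map_zero]


/-- Corollary `eqns.extn.field`: let `L(z)` be a polynomial tensor (each entry `Lc f`
a polynomial in `F[z₁,…,z_m]`).  If `L(β)` has border rank at most `r` over `F` for
every `β ∈ F^m`, then `L(z)` has border rank at most `r` over the rational function
field `F(z)` and over its algebraic closure. -/
theorem polynomial_tensor_border_rank_extension
    {F : Type*} [Field F] [Infinite F] {n d m r : ℕ}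
    (Lc : (Fin d → Fin n) → MvPolynomial (Fin m) F)
    (hβ : ∀ β : Fin m → F,
      brkCoordLE F (fun f => MvPolynomial.eval β (Lc f)) r) :
    brkCoordLE (FractionRing (MvPolynomial (Fin m) F))
      (fun f => algebraMap (MvPolynomial (Fin m) F)
        (FractionRing (MvPolynomial (Fin m) F)) (Lc f)) r ∧
    brkCoordLE (AlgebraicClosure (FractionRing (MvPolynomial (Fin m) F)))
      (fun f => algebraMap (MvPolynomial (Fin m) F)
        (AlgebraicClosure (FractionRing (MvPolynomial (Fin m) F))) (Lc f)) r := by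
  have h1 := part1 (FractionRing (MvPolynomial (Fin m) F)) Lc hβ
  refine ⟨h1, ?_⟩
  have h2 := part2 (Ω := AlgebraicClosure (FractionRing (MvPolynomial (Fin m) F))) _ h1
  have hpt : (fun f => algebraMap (MvPolynomial (Fin m) F)
        (AlgebraicClosure (FractionRing (MvPolynomial (Fin m) F))) (Lc f))
      = fun f => algebraMap (FractionRing (MvPolynomial (Fin m) F))
        (AlgebraicClosure (FractionRing (MvPolynomial (Fin m) F)))
        (algebraMap (MvPolynomial (Fin m) F) (FractionRing (MvPolynomial (Fin m) F)) (Lc f)) := by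
    funext f
    rw [IsScalarTower.algebraMap_apply (MvPolynomial (Fin m) F)
      (FractionRing (MvPolynomial (Fin m) F))
      (AlgebraicClosure (FractionRing (MvPolynomial (Fin m) F)))]
  rw [hpt]
  exact h2
end

section
/- Let F be an algebraically closed field of characteristic zero and let m ≥ 1. Let p_1, …, p_m ∈ F[x] be univariate polynomials such that the set {1, p_1, …, p_m} is linearly independent over F. Then the polynomial map L : F → F^m given by L(x) = (p_1(x), p_2(x), …, p_m(x)) is (m−1, 1)-elusive: for every polynomial map M : F^{m−1} → F^m all of whose coordinate functions are polynomials of degree at most 1, the image of L is not contained in the image of M. -/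
/-!
An affine map `F^(m-1) → F^m` has a linear part with nontrivial cokernel, so its image lies in an
affine hyperplane `∑ j, c j * z j = β` with `c ≠ 0`. If the curve `x ↦ (p j).eval x` lay in that
hyperplane, then `∑ j, c j • p j` and `β • 1` would agree at every point of the infinite field `F`,
hence as polynomials, a nontrivial linear relation among `1, p 1, …, p m`.
-/

theorem Finsupp.eq_zero_or_exists_eq_single_one_of_degree_le_one {σ : Type*} {d : σ →₀ ℕ}
    (hd : d.degree ≤ 1) : d = 0 ∨ ∃ i, d = Finsupp.single i 1 := by
  rcases Nat.le_one_iff_eq_zero_or_eq_one.mp hd with h | h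
  · exact .inl ((degree_eq_zero_iff d).mp h)
  · obtain ⟨i, hi⟩ : d ∈ Set.range (Finsupp.single · 1) := range_single_one.symm ▸ h
    exact .inr ⟨i, hi.symm⟩

namespace MvPolynomial

variable {R σ : Type*} [CommSemiring R] [Fintype σ]

theorem eq_C_add_sum_of_totalDegree_le_one {q : MvPolynomial σ R} (hq : q.totalDegree ≤ 1) :
    q = C (q.coeff 0) + ∑ i, C (q.coeff (Finsupp.single i 1)) * X i := by
  classical
  ext d
  simp only [coeff_add, coeff_C, coeff_sum, coeff_C_mul, coeff_X]
  by_cases hd : d.degree ≤ 1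
  · rcases d.eq_zero_or_exists_eq_single_one_of_degree_le_one hd with rfl | ⟨i, rfl⟩
    · simp
    · simp [Finsupp.single_left_inj, eq_comm (a := (0 : σ →₀ ℕ))]
  · have hsingle : ∀ i, Finsupp.single i 1 ≠ d := fun i h => hd (by simp [← h])
    rw [coeff_eq_zero_of_totalDegree_lt (hq.trans_lt (not_le.mp hd))]
    simp [hsingle, show (0 : σ →₀ ℕ) ≠ d by rintro rfl; simp at hd]

theorem eval_eq_of_totalDegree_le_one {q : MvPolynomial σ R} (hq : q.totalDegree ≤ 1)
    (y : σ → R) : eval y q = q.coeff 0 + ∑ i, q.coeff (Finsupp.single i 1) * y i := by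
  conv_lhs => rw [eq_C_add_sum_of_totalDegree_le_one hq]
  simp

theorem exists_ne_zero_forall_sum_mul_eval_eq {K ι : Type*} [Field K] [Fintype ι]
    (hcard : Fintype.card σ < Fintype.card ι) {M : ι → MvPolynomial σ K}
    (hM : ∀ j, (M j).totalDegree ≤ 1) :
    ∃ c : ι → K, c ≠ 0 ∧ ∃ β, ∀ y, ∑ j, c j * eval y (M j) = β := by
  set w : ι → σ → K := fun j i => (M j).coeff (Finsupp.single i 1)
  have hdep : ¬ LinearIndependent K w := fun h =>
    hcard.not_ge (Module.finrank_fintype_fun_eq_card (η := σ) K ▸ h.fintype_card_le_finrank)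
  obtain ⟨c, hcw, j, hj⟩ := Fintype.not_linearIndependent_iff.mp hdep
  refine ⟨c, fun h => hj (by simp [h]), ∑ j, c j * (M j).coeff 0, fun y => ?_⟩
  have hlin : ∑ j, c j * ∑ i, w j i * y i = 0 :=
    calc ∑ j, c j * ∑ i, w j i * y i = ∑ i, (∑ j, c j • w j) i * y i := by
          simp only [Finset.mul_sum, Finset.sum_apply, Pi.smul_apply, smul_eq_mul, Finset.sum_mul,
            mul_assoc]
          exact Finset.sum_comm
      _ = 0 := by simp only [hcw, Pi.zero_apply, zero_mul, Finset.sum_const_zero]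
  simp only [eval_eq_of_totalDegree_le_one (hM _), mul_add, Finset.sum_add_distrib]
  rw [hlin, add_zero]

end MvPolynomial

theorem sum_smul_ne_smul_of_linearIndependent_cons {R V : Type*} [Ring R] [AddCommGroup V]
    [Module R V] {m : ℕ} {x : V} {v : Fin m → V} (hv : LinearIndependent R (Fin.cons x v))
    {c : Fin m → R} (hc : c ≠ 0) (β : R) : ∑ j, c j • v j ≠ β • x := by
  intro h
  have hrel := Fintype.linearIndependent_iff.mp hv (Fin.cons (-β) c) (by
    simp [Fin.sum_univ_succ, h, neg_smul])
  exact hc (funext fun j => by simpa using hrel j.succ)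

theorem independent_curve_is_elusive_general
    {F : Type*} [Field F] [IsAlgClosed F] {m : ℕ} (hm : 1 ≤ m)
    (p : Fin m → Polynomial F)
    (hindep : LinearIndependent F (Fin.cons (1 : Polynomial F) p : Fin (m + 1) → Polynomial F))
    (M : Fin m → MvPolynomial (Fin (m - 1)) F)
    (hdeg : ∀ j, (M j).totalDegree ≤ 1) :
    ¬ (Set.range (fun x : F => fun j : Fin m => (p j).eval x) ⊆
        Set.range (fun y : Fin (m - 1) → F => fun j : Fin m => MvPolynomial.eval y (M j))) := by
  intro hsub
  obtain ⟨c, hc, β, hβ⟩ :=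
    MvPolynomial.exists_ne_zero_forall_sum_mul_eval_eq (by simp only [Fintype.card_fin]; omega) hdeg
  refine sum_smul_ne_smul_of_linearIndependent_cons hindep hc β (Polynomial.funext fun x => ?_)
  obtain ⟨y, hy⟩ := hsub ⟨x, rfl⟩
  simp only [Polynomial.eval_finsetSum, Polynomial.eval_smul, smul_eq_mul, Polynomial.eval_one,
    mul_one, ← hβ y]
  exact Finset.sum_congr rfl fun j _ => congrArg (c j * ·) (congrFun hy j).symm

/-- Proposition `elus-indep`: any polynomial curve `L : F → F^m`,
`x ↦ (p₁(x), …, p_m(x))`, whose coordinate polynomials together with `1` are linearly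
independent over `F`, is `(m-1, 1)`-elusive: for every polynomial map
`M : F^{m-1} → F^m` whose coordinate polynomials all have total degree at most `1`, the
image of `L` is not contained in the image of `M`. -/
theorem independent_curve_is_elusive
    {F : Type*} [Field F] [IsAlgClosed F] [CharZero F] {m : ℕ} (hm : 1 ≤ m)
    (p : Fin m → Polynomial F)
    (hindep : LinearIndependent F (Fin.cons (1 : Polynomial F) p : Fin (m + 1) → Polynomial F))
    (M : Fin m → MvPolynomial (Fin (m - 1)) F)
    (hdeg : ∀ j, (M j).totalDegree ≤ 1) :
    ¬ (Set.range (fun x : F => fun j : Fin m => (p j).eval x) ⊆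
        Set.range (fun y : Fin (m - 1) → F => fun j : Fin m => MvPolynomial.eval y (M j))) :=
  independent_curve_is_elusive_general hm p hindep M hdeg
end
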